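/- arXiv:1807.06052 — 2 statements merged into one kernel-verified Lean document; each statement's English description precedes it below -/
import Mathlib

section
/- Let ω = √(2√7−1), λ = √(2√7+1), and let A(a₄₁, a₃₄, a₄₃, a₄₄) be the 4-parameter family of matrices of Eq. (matrixA) (see context). Then the determinant of A equals −(14/3)λ a₄₁ a₄₃ [(10ω²+63)a₃₄² + ω² a₄₄²]. In particular A is invertible if and only if a₄₁ ≠ 0, a₄₃ ≠ 0, and (a₃₄, a₄₄) ≠ (0,0). -/
/-!
Expanding the determinant gives a polynomial in `l`, `w²` and the four parameters; it agrees with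
`-(14/3) l a₄₁ a₄₃ ((10w² + 63) a₃₄² + w² a₄₄²)` modulo `w⁴ + 2w² - 27`, which vanishes because
`w² + 1 = 2√7`. Since `l > 0` and `w² > 0`, the last factor is a positive definite quadratic form
in `(a₃₄, a₄₄)`, so the determinant vanishes exactly when `a₄₁ = 0`, `a₄₃ = 0` or `a₃₄ = a₄₄ = 0`.
-/

open Matrix

theorem det_fin_four {R : Type*} [CommRing R] (A : Matrix (Fin 4) (Fin 4) R) :
    A.det =
      A 0 0 * A 1 1 * A 2 2 * A 3 3 - A 0 0 * A 1 1 * A 2 3 * A 3 2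
      - A 0 0 * A 1 2 * A 2 1 * A 3 3 + A 0 0 * A 1 2 * A 2 3 * A 3 1
      + A 0 0 * A 1 3 * A 2 1 * A 3 2 - A 0 0 * A 1 3 * A 2 2 * A 3 1
      - A 0 1 * A 1 0 * A 2 2 * A 3 3 + A 0 1 * A 1 0 * A 2 3 * A 3 2
      + A 0 1 * A 1 2 * A 2 0 * A 3 3 - A 0 1 * A 1 2 * A 2 3 * A 3 0
      - A 0 1 * A 1 3 * A 2 0 * A 3 2 + A 0 1 * A 1 3 * A 2 2 * A 3 0
      + A 0 2 * A 1 0 * A 2 1 * A 3 3 - A 0 2 * A 1 0 * A 2 3 * A 3 1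
      - A 0 2 * A 1 1 * A 2 0 * A 3 3 + A 0 2 * A 1 1 * A 2 3 * A 3 0
      + A 0 2 * A 1 3 * A 2 0 * A 3 1 - A 0 2 * A 1 3 * A 2 1 * A 3 0
      - A 0 3 * A 1 0 * A 2 1 * A 3 2 + A 0 3 * A 1 0 * A 2 2 * A 3 1
      + A 0 3 * A 1 1 * A 2 0 * A 3 2 - A 0 3 * A 1 1 * A 2 2 * A 3 0
      - A 0 3 * A 1 2 * A 2 0 * A 3 1 + A 0 3 * A 1 2 * A 2 1 * A 3 0 := by
  simp only [det_succ_row_zero A, det_fin_three, submatrix_apply, Fin.sum_univ_succ,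
    Fin.sum_univ_zero, Fin.val_zero, Fin.val_succ, Fin.succAbove, Fin.reduceSucc,
    Fin.reduceCastSucc, Fin.reduceLT, ↓reduceIte]
  ring

section

variable {K : Type*} [Field K]

def hillMatrix (l w a41 a34 a43 a44 : K) : Matrix (Fin 4) (Fin 4) K :=
  !![-(w^2+7)*a41/4,     -(w^2+3)*a34/4,  -(w^2+7)*a43/4,     (w^2-5)*a44/4;
     l*(w^2+3)*a41/12,   -(w^2-9)*a44/4,  -(l*(w^2+3))*a43/12, -(w^2+7)*a34/4;
     -(l*(w^2+6))*a41/3, (2*w^2-9)*a44,   l*(w^2+6)*a43/3,    a34;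
     a41,                (w^2+6)*a34,     a43,                a44]

theorem det_hillMatrix [CharZero K] {l w : K} (hw : w^4 + 2*w^2 = 27) (a41 a34 a43 a44 : K) :
    (hillMatrix l w a41 a34 a43 a44).det =
      -(14/3) * l * a41 * a43 * ((10*w^2+63)*a34^2 + w^2*a44^2) := by
  rw [det_fin_four]
  simp only [hillMatrix, of_apply, cons_val', cons_val_zero, cons_val_one, cons_val_two,
    cons_val_three, head_cons, tail_cons, head_fin_const, empty_val', cons_val_fin_one]
  linear_combination l * a41 * a43 *
    ((1 - w^2) / 12 * a44^2 - (205 + 22*w^2 + w^4) / 24 * a34^2) * hw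

end

theorem mul_sq_add_mul_sq_eq_zero_iff {K : Type*} [Field K] [LinearOrder K] [IsStrictOrderedRing K]
    {p q a b : K} (hp : 0 < p) (hq : 0 < q) : p * a^2 + q * b^2 = 0 ↔ a = 0 ∧ b = 0 := by
  rw [add_eq_zero_iff_of_nonneg (by positivity) (by positivity)]
  simp [hp.ne', hq.ne']

/-- Determinant of the 4-parameter family of decoupling matrices for the Hill problem,
and the characterization of its invertibility. -/
theorem hill_matrixA_det (a41 a34 a43 a44 : ℝ) :
    let l : ℝ := Real.sqrt (2 * Real.sqrt 7 + 1)
    let w : ℝ := Real.sqrt (2 * Real.sqrt 7 - 1)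
    let A : Matrix (Fin 4) (Fin 4) ℝ :=
      !![-(w^2+7)*a41/4,     -(w^2+3)*a34/4,  -(w^2+7)*a43/4,     (w^2-5)*a44/4;
         l*(w^2+3)*a41/12,   -(w^2-9)*a44/4,  -(l*(w^2+3))*a43/12, -(w^2+7)*a34/4;
         -(l*(w^2+6))*a41/3, (2*w^2-9)*a44,   l*(w^2+6)*a43/3,    a34;
         a41,                (w^2+6)*a34,     a43,                a44]
    A.det = -(14/3) * l * a41 * a43 * ((10*w^2+63)*a34^2 + w^2*a44^2) ∧
    (IsUnit A.det ↔ (a41 ≠ 0 ∧ a43 ≠ 0 ∧ ¬(a34 = 0 ∧ a44 = 0))) := by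
  intro l w A
  have hs : Real.sqrt 7 ^ 2 = 7 := Real.sq_sqrt (by norm_num)
  have hw_sq : w^2 = 2 * Real.sqrt 7 - 1 :=
    Real.sq_sqrt (by nlinarith [Real.sqrt_nonneg 7])
  have hw : w^4 + 2*w^2 = 27 := by
    linear_combination (w^2 + 2 * Real.sqrt 7 + 1) * hw_sq + 4 * hs
  have hw_pos : 0 < w^2 := by
    refine pow_pos (Real.sqrt_pos.mpr ?_) 2
    nlinarith [Real.sqrt_nonneg 7]
  have hl : 0 < l := Real.sqrt_pos.mpr (by positivity)
  have hdet : A.det = -(14/3) * l * a41 * a43 * ((10*w^2+63)*a34^2 + w^2*a44^2) :=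
    det_hillMatrix hw a41 a34 a43 a44
  refine ⟨hdet, ?_⟩
  rw [hdet, isUnit_iff_ne_zero, Ne, mul_eq_zero,
    mul_sq_add_mul_sq_eq_zero_iff (by positivity) hw_pos]
  simp [hl.ne', not_or, and_assoc]
end

section
/- Let ω = √(2√7−1) and λ = √(2√7+1). If the parameters of the matrix A of Eq. (matrixA) satisfy λ a₄₁ a₄₃ = −(23 − 5ω²)/28 and a₃₄² + (7ω² − 30)a₄₄² = (23 − 5ω²)/42, then det A = 1. -/
/-- Under the canonicity constraints, the decoupling matrix family has determinant 1. -/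
theorem hill_matrixA_det_one (a41 a34 a43 a44 : ℝ) :
    let l : ℝ := Real.sqrt (2 * Real.sqrt 7 + 1)
    let w : ℝ := Real.sqrt (2 * Real.sqrt 7 - 1)
    let A : Matrix (Fin 4) (Fin 4) ℝ :=
      !![-(w^2+7)*a41/4,     -(w^2+3)*a34/4,  -(w^2+7)*a43/4,     (w^2-5)*a44/4;
         l*(w^2+3)*a41/12,   -(w^2-9)*a44/4,  -(l*(w^2+3))*a43/12, -(w^2+7)*a34/4;
         -(l*(w^2+6))*a41/3, (2*w^2-9)*a44,   l*(w^2+6)*a43/3,    a34;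
         a41,                (w^2+6)*a34,     a43,                a44]
    l * a41 * a43 = -(23 - 5*w^2)/28 →
    a34^2 + (7*w^2 - 30)*a44^2 = (23 - 5*w^2)/42 →
    A.det = 1 := by
  intro l w A h1 h2
  have hsnn : (0:ℝ) ≤ Real.sqrt 7 := Real.sqrt_nonneg 7
  have hs : Real.sqrt 7 ^ 2 = 7 := Real.sq_sqrt (by norm_num)
  have h1le : (1:ℝ) ≤ Real.sqrt 7 := by nlinarith
  have hw : w ^ 2 = 2 * Real.sqrt 7 - 1 := Real.sq_sqrt (by nlinarith)
  set s : ℝ := Real.sqrt 7 with hsdef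
  show Matrix.det !![-(w^2+7)*a41/4,     -(w^2+3)*a34/4,  -(w^2+7)*a43/4,     (w^2-5)*a44/4;
         l*(w^2+3)*a41/12,   -(w^2-9)*a44/4,  -(l*(w^2+3))*a43/12, -(w^2+7)*a34/4;
         -(l*(w^2+6))*a41/3, (2*w^2-9)*a44,   l*(w^2+6)*a43/3,    a34;
         a41,                (w^2+6)*a34,     a43,                a44] = 1
  rw [hw] at h1 h2 ⊢
  simp only [Matrix.det_succ_row_zero, Fin.sum_univ_succ, Finset.univ_unique,
    Fin.default_eq_zero, Finset.sum_singleton, Fin.sum_univ_zero]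
  simp [Fin.succAbove, Fin.lt_def, show ((2:Fin 3).castSucc : Fin 4) = 2 from rfl,
    Matrix.cons_val_two, Matrix.tail_cons]
  linear_combination
    (-25/21 - 220/3*a44^2 - 100/3*a34^2 + 2/3*l*a41*a43*a44^2 - 92/3*l*a41*a34^2*a43
      - 2/3*l*s*a41*a43*a44^2 - 20/3*l*s*a41*a34^2*a43 - 2/3*l*s^2*a41*a34^2*a43) * hs
    + (14/3*a44^2 - 742/3*a34^2 - 28/3*s*a44^2 - 280/3*s*a34^2) * h1
    + (14 + 5*s) * h2
end
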